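/- arXiv:2011.10843 — 17 statements merged into one kernel-verified Lean document; each statement's English description precedes it below -/
import Mathlib

section
/- Let R be a ring and e an idempotent of R such that both e and 1 − e are nonzero, and suppose R is right e-reversible and right (1−e)-reversible. If R is semiprime, then R is reduced (R has no nonzero nilpotent elements). -/
/-- If `R` is right `e`-reversible and right `(1-e)`-reversible and semiprime,
then `R` is reduced. -/
theorem semiprime_right_e_and_one_sub_e_reversible_reduced {R : Type*} [Ring R]
    (e : R) (he : IsIdempotentElem e) (hne : e ≠ 0) (hne' : 1 - e ≠ 0)
    (hrev : ∀ a b : R, a * b = 0 → b * a * e = 0)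
    (hrev' : ∀ a b : R, a * b = 0 → b * a * (1 - e) = 0)
    (hsemiprime : ∀ a : R, (∀ r : R, a * r * a = 0) → a = 0) :
    ∀ a : R, IsNilpotent a → a = 0 := by
  -- R is reversible
  have rev : ∀ a b : R, a * b = 0 → b * a = 0 := by
    intro a b h
    have h1 := hrev a b h
    have h2 := hrev' a b h
    have : b * a = b * a * e + b * a * (1 - e) := by noncomm_ring
    rw [this, h1, h2, add_zero]
  -- R is semicommutative
  have scomm : ∀ a b r : R, a * b = 0 → a * r * b = 0 := by
    intro a b r h
    have h1 : b * (a * r) = 0 := by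
      have := rev a b h
      rw [← mul_assoc, this, zero_mul]
    exact rev b (a * r) h1
  -- square-zero elements vanish
  have sq : ∀ a : R, a * a = 0 → a = 0 := by
    intro a h
    exact hsemiprime a fun r => scomm a a r h
  -- induction on nilpotency degree
  have key : ∀ n : ℕ, ∀ a : R, a ^ n = 0 → a = 0 := by
    intro n
    induction n with
    | zero =>
      intro a h
      simp only [pow_zero] at h
      calc a = a * 1 := (mul_one a).symm
        _ = a * 0 := by rw [h]
        _ = 0 := mul_zero a
    | succ k ih =>
      intro a h
      rcases Nat.eq_zero_or_pos k with hk | hk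
      · subst hk; simpa using h
      · apply ih
        apply sq
        have : a ^ k * a ^ k = a ^ (k - 1) * a ^ (k + 1) := by
          rw [← pow_add, ← pow_add]
          congr 1
          omega
        rw [this, h, mul_zero]
  rintro a ⟨n, hn⟩
  exact key n a hn
end

section
/- Let R be a ring and e a nonzero idempotent of R. Then R is right e-reversible if and only if e is left semicentral in R and the corner ring eRe is reversible, i.e., for all x, y ∈ R, (exe)(eye) = 0 implies (eye)(exe) = 0. -/
/-- `R` is right `e`-reversible iff `e` is left semicentral and `eRe` is reversible. -/
theorem right_e_reversible_iff_left_semicentral_and_corner_reversible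
    {R : Type*} [Ring R] (e : R) (he : IsIdempotentElem e) (hne : e ≠ 0) :
    (∀ a b : R, a * b = 0 → b * a * e = 0) ↔
      ((∀ a : R, a * e = e * a * e) ∧
        (∀ x y : R, (e * x * e) * (e * y * e) = 0 → (e * y * e) * (e * x * e) = 0)) := by
  have he' : e * e = e := he
  have he2 : ∀ x : R, e * (e * x) = e * x := fun x => by rw [← mul_assoc, he']
  constructor
  · intro h
    have hs : ∀ a : R, a * e = e * a * e := by
      intro a
      have h1 : e * ((1 - e) * a) = 0 := by
        rw [← mul_assoc, mul_sub, mul_one, he', sub_self, zero_mul]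
      have h2 := h _ _ h1
      rw [mul_assoc ((1 - e) * a) e e, he'] at h2
      have h4 : (1 - e) * a * e = a * e - e * a * e := by
        rw [sub_mul, one_mul, sub_mul]
      rw [h4] at h2
      exact sub_eq_zero.mp h2
    refine ⟨hs, fun x y hxy => ?_⟩
    have h2 := h _ _ hxy
    rwa [mul_assoc (e * y * e), mul_assoc (e * x) e e, he'] at h2
  · rintro ⟨hs, hc⟩ a b hab
    have hs' : ∀ x : R, x * e = e * (x * e) := fun x => by
      conv_lhs => rw [hs x, mul_assoc]
    have key : (e * a * e) * (e * b * e) = 0 := by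
      calc (e * a * e) * (e * b * e) = e * (a * (e * (e * (b * e)))) := by
            simp only [mul_assoc]
        _ = e * (a * (e * (b * e))) := by rw [he2]
        _ = e * (a * (b * e)) := by rw [← hs' b]
        _ = e * (a * b * e) := by rw [mul_assoc]
        _ = 0 := by rw [hab, zero_mul, mul_zero]
    have hcr := hc a b key
    simp only [mul_assoc, he2] at hcr
    calc b * a * e = b * (e * (a * e)) := by rw [mul_assoc]; nth_rewrite 1 [hs' a]; rfl
      _ = (b * e) * (a * e) := by rw [← mul_assoc]
      _ = (e * (b * e)) * (a * e) := by nth_rewrite 1 [hs' b]; rfl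
      _ = e * (b * (e * (a * e))) := by simp only [mul_assoc]
      _ = 0 := hcr
end

section
/- Let R be a ring and e a nonzero idempotent of R. Then R is left e-reversible if and only if e is right semicentral in R and the corner ring eRe is reversible, i.e., for all x, y ∈ R, (exe)(eye) = 0 implies (eye)(exe) = 0. -/
/-- `R` is left `e`-reversible iff `e` is right semicentral and `eRe` is reversible. -/
theorem left_e_reversible_iff_right_semicentral_and_corner_reversible
    {R : Type*} [Ring R] (e : R) (he : IsIdempotentElem e) (hne : e ≠ 0) :
    (∀ a b : R, a * b = 0 → e * (b * a) = 0) ↔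
      ((∀ a : R, e * a = e * a * e) ∧
        (∀ x y : R, (e * x * e) * (e * y * e) = 0 → (e * y * e) * (e * x * e) = 0)) := by
  have hee : e * e = e := he
  constructor
  · intro h
    have sc : ∀ a : R, e * a = e * a * e := by
      intro a
      have h0 : (a * (1 - e)) * e = 0 := by
        rw [mul_assoc, sub_mul, one_mul, hee, sub_self, mul_zero]
      have h1 := h (a * (1 - e)) e h0
      have h2 : e * (e * (a * (1 - e))) = e * a - e * a * e := by
        rw [← mul_assoc, hee]; noncomm_ring
      rw [h2] at h1
      exact sub_eq_zero.mp h1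
    refine ⟨sc, ?_⟩
    intro x y hxy
    have h1 := h _ _ hxy
    simp only [← mul_assoc] at h1 ⊢
    rw [hee] at h1
    exact h1
  · rintro ⟨sc, cr⟩ a b hab
    have h1 : (e * a * e) * (e * b * e) = 0 := by
      rw [← sc a, ← sc b]
      simp only [← mul_assoc]
      rw [← sc a, mul_assoc, hab, mul_zero]
    have h2 := cr a b h1
    rw [← sc b, ← sc a] at h2
    simp only [← mul_assoc] at h2
    rw [← sc b] at h2
    rw [← mul_assoc]
    exact h2
end

section
/- Let R be a ring and e a nonzero idempotent of R. If R is right e-reversible, then R is right e-semicommutative. -/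
/-- Every right `e`-reversible ring is right `e`-semicommutative. -/
theorem right_e_reversible_implies_right_e_semicommutative {R : Type*} [Ring R]
    (e : R) (he : IsIdempotentElem e) (hne : e ≠ 0)
    (hrev : ∀ a b : R, a * b = 0 → b * a * e = 0) :
    ∀ a b : R, a * b = 0 → ∀ r : R, a * r * b * e = 0 := by
  intro a b hab r
  have h1 : b * a * e = 0 := hrev a b hab
  -- Step 1: a * e * r * b * e = 0
  have h2 : b * (a * e * r) = 0 := by
    calc b * (a * e * r) = b * a * e * r := by simp only [mul_assoc]
    _ = 0 := by rw [h1, zero_mul]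
  have h3 : a * e * r * b * e = 0 := hrev b (a * e * r) h2
  -- Step 2: for all x, x * e = e * x * e
  have hcen : ∀ x : R, x * e = e * x * e := by
    intro x
    have h0 : e * (x - e * x) = 0 := by
      rw [mul_sub, ← mul_assoc, he.eq, sub_self]
    have h4 : (x - e * x) * e * e = 0 := hrev e (x - e * x) h0
    have h5 : (x - e * x) * e = 0 := by
      rwa [mul_assoc, he.eq] at h4
    rw [sub_mul] at h5
    exact sub_eq_zero.mp h5
  -- Conclude
  have hc := hcen (r * b)
  simp only [mul_assoc] at h3 hc ⊢
  rw [hc]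
  exact h3
end

section
/- Let R be a ring and e a nonzero idempotent of R. If R is right e-semicommutative and reflexive, then R is right e-reversible. -/
/-- Every right `e`-semicommutative reflexive ring is right `e`-reversible. -/
theorem right_e_semicommutative_reflexive_implies_right_e_reversible {R : Type*} [Ring R]
    (e : R) (he : IsIdempotentElem e) (hne : e ≠ 0)
    (hsemi : ∀ a b : R, a * b = 0 → ∀ r : R, a * r * b * e = 0)
    (hrefl : ∀ a b : R, (∀ r : R, a * r * b = 0) → ∀ r : R, b * r * a = 0) :
    ∀ a b : R, a * b = 0 → b * a * e = 0 := by
  intro a b hab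
  -- From `a*b = 0`, semicommutativity gives `a * r * (b*e) = 0` for all r.
  have h1 : ∀ r : R, a * r * (b * e) = 0 := fun r => by
    have := hsemi a b hab r
    rwa [← mul_assoc]
  -- Reflexivity gives `(b*e) * r * a = 0` for all r; take r = 1.
  have h2 : b * e * a = 0 := by
    have := hrefl a (b * e) h1 1
    simpa using this
  -- Key: `(1-e)*e = 0`, so semicommutativity with r gives `r*e = e*r*e`.
  have key : ∀ r : R, r * e = e * (r * e) := by
    intro r
    have h0 : (1 - e) * e = 0 := by
      have h : e * e = e := he
      calc (1 - e) * e = e - e * e := by noncomm_ring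
        _ = 0 := by rw [h, sub_self]
    have := hsemi (1 - e) e h0 r
    have h3 : (1 - e) * r * (e * e) = 0 := by rwa [← mul_assoc]
    rw [he] at h3
    have h4 : r * e - e * (r * e) = 0 := by
      calc r * e - e * (r * e) = (1 - e) * r * e := by noncomm_ring
        _ = 0 := h3
    exact sub_eq_zero.mp h4
  -- Now `b*a*e = b*(e*a*e) = (b*e*a)*e = 0`.
  have hae : a * e = e * (a * e) := key a
  calc b * a * e = b * (a * e) := by rw [mul_assoc]
    _ = b * (e * (a * e)) := by rw [← hae]
    _ = b * e * a * e := by noncomm_ring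
    _ = 0 * e := by rw [h2]
    _ = 0 := zero_mul e
end

section
/- Let R be a ring, e a nonzero idempotent of R such that R is right e-reversible, and a ∈ R. Then: (1) if ea = 0, then are = 0 for all r ∈ R; and (2) if ae = 0, then are = 0 for all r ∈ R. -/
/-- In a right `e`-reversible ring: if `e * a = 0` then `a * r * e = 0` for all `r`,
and if `a * e = 0` then `a * r * e = 0` for all `r`. -/
theorem right_e_reversible_annihilator_lemma {R : Type*} [Ring R]
    (e : R) (he : IsIdempotentElem e) (hne : e ≠ 0)
    (hrev : ∀ a b : R, a * b = 0 → b * a * e = 0) (a : R) :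
    (e * a = 0 → ∀ r : R, a * r * e = 0) ∧ (a * e = 0 → ∀ r : R, a * r * e = 0) := by
  have hee : e * e = e := he
  -- key: s * e = e * s * e for all s
  have key : ∀ s : R, s * e = e * s * e := by
    intro s
    have h0 : e * ((1 - e) * s) = 0 := by
      rw [← mul_assoc, mul_sub, mul_one, hee, sub_self, zero_mul]
    have h1 := hrev e ((1 - e) * s) h0
    have h2 : (1 - e) * s * e = 0 := by
      have h : (1 - e) * s * e * e = (1 - e) * s * e := by
        rw [mul_assoc ((1-e)*s) e e, hee]
      rwa [h] at h1
    have h3 : s * e - e * s * e = 0 := by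
      rw [← h2]; noncomm_ring
    exact sub_eq_zero.mp h3
  constructor
  · intro hea r
    have h0 : e * (a * r) = 0 := by rw [← mul_assoc, hea, zero_mul]
    have h1 := hrev e (a * r) h0
    rwa [mul_assoc (a*r) e e, hee] at h1
  · intro hae r
    have heae : e * a * e = 0 := hrev a e hae
    calc a * r * e = e * (a * r) * e := key (a * r)
    _ = e * a * (r * e) := by noncomm_ring
    _ = e * a * (e * r * e) := by rw [key r]
    _ = (e * a * e) * (r * e) := by noncomm_ring
    _ = 0 := by rw [heae, zero_mul]
end

section
/- Let R be a ring and e a nonzero idempotent of R. Then R is right e-reversible if and only if e is left semicentral in R and for all a, b ∈ R, whenever ab is an idempotent, bae is an idempotent. -/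
/-- `R` is right `e`-reversible iff `e` is left semicentral and `a * b` idempotent
implies `b * a * e` idempotent. -/
theorem right_e_reversible_iff_idempotents_transfer {R : Type*} [Ring R]
    (e : R) (he : IsIdempotentElem e) (hne : e ≠ 0) :
    (∀ a b : R, a * b = 0 → b * a * e = 0) ↔
      ((∀ a : R, a * e = e * a * e) ∧
        (∀ a b : R, IsIdempotentElem (a * b) → IsIdempotentElem (b * a * e))) := by
  have hee : e * e = e := he
  constructor
  · intro h
    have hsc : ∀ x : R, x * e = e * x * e := by
      intro x
      have h1 : (x * e) * (1 - e) = 0 := by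
        rw [mul_sub, mul_one, mul_assoc, hee, sub_self]
      have h2 := h (x * e) (1 - e) h1
      simp only [sub_mul, one_mul, mul_assoc, hee] at h2
      have := sub_eq_zero.mp h2
      simpa [mul_assoc] using this
    refine ⟨hsc, fun a b hab => ?_⟩
    have hab' : (a * b) * (a * b) = a * b := hab
    have h1 : (a * b * a - a) * b = 0 := by
      rw [sub_mul, mul_assoc (a * b) a b, hab', sub_self]
    have h2 := h (a * b * a - a) b h1
    simp only [mul_sub, sub_mul, mul_assoc] at h2
    have h3 : b * (a * (b * (a * e))) = b * (a * e) := sub_eq_zero.mp h2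
    have key : e * (b * (a * e)) = b * (a * e) := by
      have := hsc (b * a)
      simp only [mul_assoc] at this
      exact this.symm
    show (b * a * e) * (b * a * e) = b * a * e
    simp only [mul_assoc]
    rw [key]
    exact h3
  · rintro ⟨hsc, hid⟩ a b hab
    have hidem : IsIdempotentElem (a * b) := by
      show (a * b) * (a * b) = a * b
      rw [hab, mul_zero]
    have hf : (b * a * e) * (b * a * e) = b * a * e := hid a b hidem
    have key : e * (b * (a * e)) = b * (a * e) := by
      have := hsc (b * a)
      simp only [mul_assoc] at this
      exact this.symm
    calc b * a * e = (b * a * e) * (b * a * e) := hf.symm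
      _ = b * (a * (e * (b * (a * e)))) := by simp only [mul_assoc]
      _ = b * (a * (b * (a * e))) := by rw [key]
      _ = b * ((a * b) * (a * e)) := by simp only [mul_assoc]
      _ = 0 := by rw [hab, zero_mul, mul_zero]
end

section
/- Let R be a ring and e a nonzero idempotent of R. Then R is right e-reversible if and only if for all a, b ∈ R, whenever ab is an idempotent, abe = bae. -/
private lemma step_fact {R : Type*} [Ring R] {X Y P Q : R} (c d : R) (F : P = Q)
    (hid : X - Y = c * (P - Q) * d) : X = Y := by
  have hz : c * (P - Q) * d = 0 := by
    rw [sub_eq_zero.mpr F, mul_zero, zero_mul]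
  rw [hz] at hid
  exact sub_eq_zero.mp hid

private lemma step_zero {R : Type*} [Ring R] {X Y Z : R} (c d : R) (hZ : Z = 0)
    (hid : X - Y = c * Z * d) : X = Y := by
  rw [hZ, mul_zero, zero_mul] at hid
  exact sub_eq_zero.mp hid

/-- `R` is right `e`-reversible iff `a * b` idempotent implies `a * b * e = b * a * e`. -/
theorem right_e_reversible_iff_idempotent_comm {R : Type*} [Ring R]
    (e : R) (he : IsIdempotentElem e) (hne : e ≠ 0) :
    (∀ a b : R, a * b = 0 → b * a * e = 0) ↔
      (∀ a b : R, IsIdempotentElem (a * b) → a * b * e = b * a * e) := by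
  have hee : e * e = e := he.eq
  constructor
  · intro H a b hab'
    have hab : a * b * (a * b) = a * b := hab'.eq
    -- P1 : for idempotent f, t*f*e = f*t*f*e
    have P1 : ∀ f : R, f * f = f → ∀ t : R, t * f * e = f * (t * f * e) := by
      intro f hf t
      have hz1 : f * (t - f * t) = 0 := by
        have h0 : f * (t - f * t) = (f - f * f) * t := by noncomm_ring
        rw [h0, hf, sub_self, zero_mul]
      have hz2 := H f (t - f * t) hz1
      exact step_zero 1 1 hz2 (by noncomm_ring)
    -- P2 : for idempotent f, f*t*e = f*t*f*e
    have P2 : ∀ f : R, f * f = f → ∀ t : R, f * t * e = f * (t * f * e) := by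
      intro f hf t
      have hz1 : (t - t * f) * f = 0 := by
        have h0 : (t - t * f) * f = -(t * (f * f - f)) := by noncomm_ring
        rw [h0, hf, sub_self, mul_zero, neg_zero]
      have hz2 := H (t - t * f) f hz1
      exact step_zero 1 1 hz2 (by noncomm_ring)
    -- R1 : for idempotent f, t*f*e = f*t*e
    have R1 : ∀ f : R, f * f = f → ∀ t : R, t * f * e = f * t * e := by
      intro f hf t
      have h1 := P1 f hf t
      have h2 := P2 f hf t
      exact h1.trans h2.symm
    -- R0 : e*r*e = r*e
    have R0 : ∀ r : R, e * r * e = r * e := by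
      intro r
      have hz1 : e * ((1 - e) * r) = 0 := by
        have h0 : e * ((1 - e) * r) = (e - e * e) * r := by noncomm_ring
        rw [h0, hee, sub_self, zero_mul]
      have hz2 := H e ((1 - e) * r) hz1
      -- hz2 : (1-e)*r*e*e = 0
      have hz3 : (1 - e) * r * e = 0 := by
        rw [mul_assoc ((1 - e) * r) e e, hee] at hz2
        exact hz2
      exact step_zero (-1) 1 hz3 (by noncomm_ring)
    -- R2 : for idempotent f, f*e*w*e = f*w*e
    have R2 : ∀ f : R, f * f = f → ∀ w : R, f * e * w * e = f * w * e := by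
      intro f hf w
      have h8 : f * e * w * e = f * e * (f * w) * e := by
        have hz1 : (w - f * w) * (f * e) = 0 := by
          have h0 : (w - f * w) * (f * e) = w * f * e - f * (w * f * e) := by noncomm_ring
          rw [h0, ← P1 f hf w, sub_self]
        have hz2 := H (w - f * w) (f * e) hz1
        exact step_zero 1 1 hz2 (by noncomm_ring)
      have h9 : f * w * e = f * e * (f * w) * e := by
        have hz1 : (f * w) * (e - f * e) = 0 := by
          have h0 : (f * w) * (e - f * e) = f * w * e - f * (w * f * e) := by noncomm_ring
          rw [h0, ← P2 f hf w, sub_self]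
        have hz2 := H (f * w) (e - f * e) hz1
        have h01 : f * w * e = e * (f * w) * e := (R0 (f * w)).symm
        have h02 : e * (f * w) * e = f * e * (f * w) * e :=
          step_zero 1 1 hz2 (by noncomm_ring)
        exact h01.trans h02
      exact h8.trans h9.symm
    -- hh : (b*a)*(b*a) is idempotent
    have hh : (b * a * (b * a)) * (b * a * (b * a)) = b * a * (b * a) := by
      have h0 : (b * a * (b * a)) * (b * a * (b * a)) = b * ((a * b * (a * b)) * (a * b)) * a := by
        noncomm_ring
      rw [h0, hab, hab]
      noncomm_ring
    -- hA : b*a*e = b*a*(b*a)*e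
    have hA : b * a * e = b * a * (b * a) * e := by
      have hz1 : a * (b - b * (a * b)) = 0 := by
        have h0 : a * (b - b * (a * b)) = a * b - a * b * (a * b) := by noncomm_ring
        rw [h0, hab, sub_self]
      have hz2 := H a (b - b * (a * b)) hz1
      exact step_zero 1 1 hz2 (by noncomm_ring)
    -- hgh : a*b*(b*a*(b*a))*e = a*b*e
    have hgh : a * b * (b * a * (b * a)) * e = a * b * e := by
      have h1 := R1 (b * a * (b * a)) hh b
      -- h1 : b*(b*a*(b*a))*e = (b*a*(b*a))*b*e
      have h2 : a * b * (b * a * (b * a)) * e = a * b * (a * b) * (a * b) * e :=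
        step_fact a 1 h1 (by noncomm_ring)
      rw [h2, hab, hab]
    calc a * b * e
        = a * b * (b * a * (b * a)) * e := hgh.symm
      _ = a * b * e * (b * a * (b * a)) * e := (R2 (a * b) hab (b * a * (b * a))).symm
      _ = a * b * e * (b * a) * e := step_fact (a * b * e) 1 hA.symm (by noncomm_ring)
      _ = a * b * (b * a) * e := R2 (a * b) hab (b * a)
      _ = b * a * (a * b) * e := (R1 (a * b) hab (b * a)).symm
      _ = b * a * (b * a) * e := step_fact b 1 (R1 (a * b) hab a) (by noncomm_ring)
      _ = b * a * e := hA.symm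
  · intro H a b hab
    have hid : IsIdempotentElem (a * b) := by
      unfold IsIdempotentElem
      rw [hab, mul_zero]
    have h1 := H a b hid
    rw [hab, zero_mul] at h1
    exact h1.symm
end

section
/- Let R be a ring. Then every left minimal idempotent of R is left semicentral (i.e., R is left min-abel) if and only if R is right e-reversible for every left minimal idempotent e of R. -/
/-- If `y` is a nonzero element of the atom `span {f}`, then `span {y} = span {f}`. -/
lemma span_singleton_eq_of_atom {R : Type*} [Ring R] {f y : R}
    (hatom : IsAtom (Submodule.span R {f} : Submodule R R))
    (hy : y ∈ Submodule.span R {f}) (hy0 : y ≠ 0) :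
    Submodule.span R {y} = Submodule.span R {f} := by
  have hle : Submodule.span R {y} ≤ Submodule.span R {f} :=
    Submodule.span_le.mpr (by simpa using hy)
  rcases hle.lt_or_eq with h | h
  · exfalso
    have hb := hatom.2 _ h
    exact hy0 (by simpa using Submodule.span_eq_bot.mp hb y rfl)
  · exact h

/-- `R` is left min-abel (every left minimal idempotent is left semicentral) iff
`R` is right `e`-reversible for every left minimal idempotent `e`. -/
theorem left_min_abel_iff_right_reversible_at_left_min_idempotents
    {R : Type*} [Ring R] :
    (∀ f : R, f ≠ 0 → IsIdempotentElem f → IsAtom (Submodule.span R {f} : Submodule R R) →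
      ∀ a : R, a * f = f * a * f) ↔
    (∀ f : R, f ≠ 0 → IsIdempotentElem f → IsAtom (Submodule.span R {f} : Submodule R R) →
      ∀ a b : R, a * b = 0 → b * a * f = 0) := by
  constructor
  · -- left min-abel → right reversible at minimal idempotents
    intro h f hf0 hfi hatom a b hab
    have hfi' : f * f = f := hfi
    by_contra hx
    set x : R := b * a * f with hxdef
    -- semicentrality at f
    have hba : b * a * f = f * (b * a) * f := h f hf0 hfi hatom (b * a)
    have hfx : f * x = x := by
      show f * (b * a * f) = x
      calc f * (b * a * f) = f * (b * a) * f := by noncomm_ring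
        _ = b * a * f := hba.symm
    -- x ∈ span {f}, nonzero, so span {x} = span {f}
    have hmem : x ∈ Submodule.span R {f} := by
      rw [Submodule.mem_span_singleton]
      exact ⟨b * a, by rw [smul_eq_mul, hxdef, mul_assoc]⟩
    have hspan := span_singleton_eq_of_atom hatom hmem hx
    have hfmem : f ∈ Submodule.span R {x} := by
      rw [hspan]; exact Submodule.mem_span_singleton_self f
    obtain ⟨c, hc⟩ := Submodule.mem_span_singleton.mp hfmem
    rw [smul_eq_mul] at hc
    set d : R := f * c * f with hddef
    have hdx : d * x = f := by
      rw [hddef]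
      calc f * c * f * x = f * c * x := by rw [mul_assoc (f * c), hfx]
        _ = f * (c * x) := by rw [mul_assoc]
        _ = f * f := by rw [hc]
        _ = f := hfi'
    have h2 : (f - x * d) * x = 0 := by
      have hxf : x * f = x := by
        show b * a * f * f = x
        rw [mul_assoc (b * a), hfi']
      calc (f - x * d) * x = f * x - x * (d * x) := by noncomm_ring
        _ = x - x * f := by rw [hfx, hdx]
        _ = 0 := by rw [hxf, sub_self]
    by_cases hfg : f - x * d = 0
    · -- f = x * d, hence a * f = a * b * (a * f * d) = 0
      have hfeq : f = x * d := sub_eq_zero.mp hfg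
      have haf : a * f = 0 := by
        calc a * f = a * (x * d) := by rw [← hfeq]
          _ = a * b * (a * f * d) := by rw [hxdef]; noncomm_ring
          _ = 0 := by rw [hab, zero_mul]
      exact hx (by rw [hxdef, mul_assoc, haf, mul_zero])
    · -- f - x*d is a nonzero element of span {f}
      have hmem2 : f - x * d ∈ Submodule.span R {f} := by
        apply Submodule.sub_mem
        · exact Submodule.mem_span_singleton_self f
        · rw [Submodule.mem_span_singleton]
          exact ⟨x * f * c, by rw [smul_eq_mul, hddef]; noncomm_ring⟩
      have hspan2 := span_singleton_eq_of_atom hatom hmem2 hfg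
      have hfmem2 : f ∈ Submodule.span R {f - x * d} := by
        rw [hspan2]; exact Submodule.mem_span_singleton_self f
      obtain ⟨s, hs⟩ := Submodule.mem_span_singleton.mp hfmem2
      rw [smul_eq_mul] at hs
      apply hx
      calc x = f * x := hfx.symm
        _ = s * (f - x * d) * x := by rw [hs]
        _ = s * ((f - x * d) * x) := by rw [mul_assoc]
        _ = 0 := by rw [h2, mul_zero]
  · -- right reversible at minimal idempotents → left min-abel
    intro h f hf0 hfi hatom a
    have hfi' : f * f = f := hfi
    have key : f * ((1 - f) * a) = 0 := by
      calc f * ((1 - f) * a) = (f - f * f) * a := by noncomm_ring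
        _ = 0 := by rw [hfi', sub_self, zero_mul]
    have := h f hf0 hfi hatom f ((1 - f) * a) key
    -- this : (1 - f) * a * f * f = 0
    have h2 : (1 - f) * a * f = 0 := by
      calc (1 - f) * a * f = (1 - f) * a * (f * f) := by rw [hfi']
        _ = 0 := by rw [← mul_assoc, this]
    have h3 : a * f - f * a * f = 0 := by rw [← h2]; noncomm_ring
    rw [← sub_eq_zero]; exact h3
end

section
/- Let R be a ring, I a two-sided ideal of R containing no nonzero nilpotent elements (i.e., I is reduced as a ring without identity), and e an idempotent of R with e ∉ I. If the quotient ring R/I is right (e + I)-reversible, then e is left semicentral in R. -/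
/-- If `I` is a two-sided ideal with no nonzero nilpotent elements, `e` is an idempotent
with `e ∉ I`, and `R/I` is right `(e + I)`-reversible, then `e` is left semicentral in `R`. -/
theorem quotient_right_reversible_implies_left_semicentral
    {R : Type*} [Ring R] (I : TwoSidedIdeal R)
    (hI : ∀ x ∈ I, IsNilpotent x → x = 0)
    (e : R) (he : IsIdempotentElem e) (heI : e ∉ I)
    (hrev : ∀ A B : I.ringCon.Quotient, A * B = 0 → B * A * (I.ringCon.mk' e) = 0) :
    ∀ a : R, a * e = e * a * e := by
  intro a
  set u : R := (1 - e) * a * e with hu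
  -- Step 1: u ∈ I
  have h1 : (I.ringCon.mk' e) * (I.ringCon.mk' ((1 - e) * a)) = 0 := by
    rw [← map_mul, ← map_zero I.ringCon.mk']
    congr 1
    have : e * ((1 - e) * a) = (e - e * e) * a := by noncomm_ring
    rw [this, he.eq, sub_self, zero_mul]
  have h2 := hrev _ _ h1
  rw [← map_mul, ← map_mul] at h2
  have h3 : (1 - e) * a * e * e = u := by
    rw [hu, mul_assoc, he.eq]
  rw [h3, ← map_zero I.ringCon.mk'] at h2
  have huI : u ∈ I := by
    rw [TwoSidedIdeal.mem_iff]
    exact Quotient.eq''.mp h2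
  -- Step 2: u² = 0
  have hu2 : u * u = 0 := by
    have : u * u = (1 - e) * a * (e * (1 - e)) * (a * e) := by rw [hu]; noncomm_ring
    rw [this]
    have : e * (1 - e) = 0 := by
      have := he.eq; rw [mul_sub, mul_one, this, sub_self]
    rw [this, mul_zero, zero_mul]
  have hu0 : u = 0 := hI u huI ⟨2, by rw [sq, hu2]⟩
  have : (1 - e) * a * e = 0 := hu0
  have h4 : a * e - e * a * e = 0 := by
    rw [← this]; noncomm_ring
  exact sub_eq_zero.mp h4
end

section
/- Let R be a ring, I a two-sided ideal of R containing no nonzero nilpotent elements (i.e., I is reduced as a ring without identity), and e an idempotent of R with e ∉ I. If the quotient ring R/I is right (e + I)-reversible, then R is right e-reversible. -/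
/-- If `I` is a two-sided ideal with no nonzero nilpotent elements, `e` is an idempotent
with `e ∉ I`, and `R/I` is right `(e + I)`-reversible, then `R` is right `e`-reversible. -/
theorem quotient_right_reversible_lifts
    {R : Type*} [Ring R] (I : TwoSidedIdeal R)
    (hI : ∀ x ∈ I, IsNilpotent x → x = 0)
    (e : R) (he : IsIdempotentElem e) (heI : e ∉ I)
    (hrev : ∀ A B : I.ringCon.Quotient, A * B = 0 → B * A * (I.ringCon.mk' e) = 0) :
    ∀ a b : R, a * b = 0 → b * a * e = 0 := by
  intro a b hab
  set x := b * a * e with hx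
  -- Step 1: x ∈ I, from the quotient hypothesis
  have h1 : I.ringCon.mk' a * I.ringCon.mk' b = 0 := by
    rw [← map_mul, hab, map_zero]
  have h2 := hrev _ _ h1
  rw [← map_mul, ← map_mul] at h2
  have hxI : x ∈ I := by
    rw [TwoSidedIdeal.mem_iff]
    have : I.ringCon.mk' x = I.ringCon.mk' 0 := by rw [map_zero]; exact h2
    exact I.ringCon.eq.mp this
  -- Step 2: a * x = 0
  have hax : a * x = 0 := by
    have : a * x = (a * b) * (a * e) := by rw [hx]; noncomm_ring
    rw [this, hab, zero_mul]
  -- Step 3: x * b * a ∈ I and its square is zero, hence it is zero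
  have hyI : x * b * a ∈ I := I.mul_mem_right _ _ (I.mul_mem_right _ _ hxI)
  have hy2 : (x * b * a) * (x * b * a) = 0 := by
    have : (x * b * a) * (x * b * a) = x * b * (a * x) * b * a := by noncomm_ring
    rw [this, hax, mul_zero, zero_mul, zero_mul]
  have hy0 : x * b * a = 0 := hI _ hyI ⟨2, by rw [sq]; exact hy2⟩
  -- Step 4: x * x = (x * b * a) * e = 0, hence x = 0
  have hx2 : x * x = 0 := by
    have : x * x = (x * b * a) * e := by rw [hx]; noncomm_ring
    rw [this, hy0, zero_mul]
  exact hI _ hxI ⟨2, by rw [sq]; exact hx2⟩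
end

section
/- Let R be a ring, e a nonzero idempotent of R such that R is e-symmetric, J a nonempty subset of R, and I a two-sided ideal of R such that I equals the right annihilator r_R(J) = {x ∈ R : jx = 0 for all j ∈ J}. If e ∉ I, then the quotient ring R/I is right (e + I)-reversible. -/
/-! Membership in a right annihilator `r(J)` is tested one `j ∈ J` at a time, and
`e`-symmetry applied to `j * a * b = 0` gives `j * b * a * e = 0`; so `a * b ∈ r(J)` forces
`b * a * e ∈ r(J)`, which is right `(e + I)`-reversibility of `R / I` read in `R`. -/

theorem mul_mul_mul_idem_eq_zero_of_mul_mul_eq_zero {R : Type*} [Ring R] {e : R}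
    (hsymm : ∀ a b c : R, a * b * c = 0 → a * c * b * e = 0) {j a b : R}
    (h : j * (a * b) = 0) : j * (b * a * e) = 0 := by
  simpa only [mul_assoc] using hsymm j a b (by rwa [mul_assoc])

theorem TwoSidedIdeal.mul_mul_mk'_eq_zero_of_mul_eq_zero {R : Type*} [Ring R]
    (I : TwoSidedIdeal R) (e : R) (hI : ∀ a b : R, a * b ∈ I → b * a * e ∈ I)
    (A B : I.ringCon.Quotient) (hAB : A * B = 0) : B * A * I.ringCon.mk' e = 0 := by
  induction A using Quotient.inductionOn' with | h a =>
  induction B using Quotient.inductionOn' with | h b =>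
  have hab : a * b ∈ I := (I.mem_iff _).2 ((RingCon.eq _).1 hAB)
  change I.ringCon.mk' (b * a * e) = I.ringCon.mk' 0
  exact (RingCon.eq _).2 ((I.mem_iff _).1 (hI a b hab))

theorem quotient_of_e_symmetric_right_reversible_general
    {R : Type*} [Ring R]
    (e : R)
    (hsymm : ∀ a b c : R, a * b * c = 0 → a * c * b * e = 0)
    (J : Set R)
    (I : TwoSidedIdeal R) (hI : ∀ x : R, x ∈ I ↔ ∀ j ∈ J, j * x = 0) :
    ∀ A B : I.ringCon.Quotient, A * B = 0 → B * A * (I.ringCon.mk' e) = 0 := by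
  refine I.mul_mul_mk'_eq_zero_of_mul_eq_zero e fun a b hab => ?_
  rw [hI] at hab ⊢
  exact fun j hj => mul_mul_mul_idem_eq_zero_of_mul_mul_eq_zero hsymm (hab j hj)

/-- If `R` is `e`-symmetric and `I` is a two-sided ideal equal to the right annihilator
of a nonempty subset `J`, with `e ∉ I`, then `R/I` is right `(e + I)`-reversible. -/
theorem quotient_of_e_symmetric_right_reversible
    {R : Type*} [Ring R]
    (e : R) (he : IsIdempotentElem e) (hne : e ≠ 0)
    (hsymm : ∀ a b c : R, a * b * c = 0 → a * c * b * e = 0)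
    (J : Set R) (hJ : J.Nonempty)
    (I : TwoSidedIdeal R) (hI : ∀ x : R, x ∈ I ↔ ∀ j ∈ J, j * x = 0)
    (heI : e ∉ I) :
    ∀ A B : I.ringCon.Quotient, A * B = 0 → B * A * (I.ringCon.mk' e) = 0 :=
  quotient_of_e_symmetric_right_reversible_general e hsymm J I hI
end

section
/- Let (R_i)_{i ∈ I} be a family of rings indexed by a set I, and for each i ∈ I let e_i be a nonzero idempotent of R_i; set e = (e_i)_{i ∈ I} in the direct product ∏_{i ∈ I} R_i. Then R_i is right e_i-reversible for every i ∈ I if and only if ∏_{i ∈ I} R_i is right e-reversible. -/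
/-- A direct product `∏ᵢ Rᵢ` is right `e`-reversible (for `e = (eᵢ)ᵢ`) iff each
`Rᵢ` is right `eᵢ`-reversible. -/
theorem prod_right_e_reversible_iff {ι : Type*} (R : ι → Type*) [∀ i, Ring (R i)]
    (e : ∀ i, R i) (he : ∀ i, IsIdempotentElem (e i)) (hne : ∀ i, e i ≠ 0) :
    (∀ i, ∀ a b : R i, a * b = 0 → b * a * e i = 0) ↔
      (∀ a b : ∀ i, R i, a * b = 0 → b * a * e = 0) := by
  constructor
  · intro h a b hab
    funext i
    exact h i (a i) (b i) (congrFun hab i)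
  · intro h i a b hab
    classical
    have := h (Pi.single i a) (Pi.single i b) ?_
    · have := congrFun this i
      simpa using this
    · funext j
      by_cases hj : j = i
      · subst hj; simpa using hab
      · simp [Pi.single_eq_of_ne hj]
end

section
/- Let R be a semiprime ring and e a nonzero idempotent of R. Then the following are equivalent: (1) R is right e-reversible; (2) R is right e-reduced; (3) R is e-symmetric; (4) R is right e-semicommutative. -/
/-- For a semiprime ring `R` and nonzero idempotent `e`, the following are equivalent:
right `e`-reversible, right `e`-reduced, `e`-symmetric, right `e`-semicommutative. -/
theorem semiprime_right_e_reversible_tfae {R : Type*} [Ring R]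
    (e : R) (he : IsIdempotentElem e) (hne : e ≠ 0)
    (hsemiprime : ∀ a : R, (∀ r : R, a * r * a = 0) → a = 0) :
    ((∀ a b : R, a * b = 0 → b * a * e = 0) ↔
        (∀ n : R, IsNilpotent n → n * e = 0)) ∧
      ((∀ a b : R, a * b = 0 → b * a * e = 0) ↔
        (∀ a b c : R, a * b * c = 0 → a * c * b * e = 0)) ∧
      ((∀ a b : R, a * b = 0 → b * a * e = 0) ↔
        (∀ a b : R, a * b = 0 → ∀ r : R, a * r * b * e = 0)) := by
  have he' : e * e = e := he
  -- semiprime annihilator symmetry: x R y = 0 → y R x = 0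
  have L0 : ∀ x y : R, (∀ t : R, x * t * y = 0) → ∀ t : R, y * t * x = 0 := by
    intro x y h t
    apply hsemiprime
    intro r
    calc y * t * x * r * (y * t * x) = y * t * ((x * r * y) * (t * x)) := by noncomm_ring
      _ = 0 := by rw [h r, zero_mul, mul_zero]
  -- from x r (x e) = 0 for all r, conclude x e = 0
  have L01 : ∀ x : R, (∀ r : R, x * r * (x * e) = 0) → x * e = 0 := by
    intro x h
    apply hsemiprime
    intro r
    calc x * e * r * (x * e) = x * (e * r) * (x * e) := by noncomm_ring
      _ = 0 := h (e * r)
  -- The central condition Z : squares zero implies annihilated by e on the right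
  -- Z implies e is central
  have Zcentral : (∀ x : R, x * x = 0 → x * e = 0) → ∀ r : R, e * r = r * e := by
    intro hZ
    have half : ∀ s : R, s * e = e * (s * e) := by
      intro s
      have h1 : (s * e - e * (s * e)) * e = s * e - e * (s * e) := by
        simp only [sub_mul, mul_assoc, he']
      have h2 : e * (s * e - e * (s * e)) = 0 := by
        simp only [mul_sub, ← mul_assoc, he', sub_self]
      have hxx : (s * e - e * (s * e)) * (s * e - e * (s * e)) = 0 := by
        nth_rewrite 1 [← h1]
        rw [mul_assoc, h2, mul_zero]
      have h3 := hZ _ hxx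
      rw [h1] at h3
      exact sub_eq_zero.mp h3
    have h1 : ∀ t : R, (1 - e) * t * e = 0 := by
      intro t
      have : (1 - e) * t * e = t * e - e * (t * e) := by noncomm_ring
      rw [this, ← half t, sub_self]
    have h2 := L0 (1 - e) e h1
    intro r
    have h3 := h2 r
    have h4 : e * r - e * r * e = 0 := by
      calc e * r - e * r * e = e * r * (1 - e) := by noncomm_ring
        _ = 0 := h3
    have h5 : e * r = e * r * e := sub_eq_zero.mp h4
    calc e * r = e * r * e := h5
      _ = e * (r * e) := by rw [mul_assoc]
      _ = r * e := (half r).symm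
  -- Z implies a weak semicommutativity: a b = 0 → a e r b = 0
  have Zsemi : (∀ x : R, x * x = 0 → x * e = 0) →
      ∀ a b : R, a * b = 0 → ∀ r : R, a * e * r * b = 0 := by
    intro hZ a b hab
    have h1 : ∀ t : R, b * t * (a * e) = 0 := by
      intro t
      have hsq : (b * t * a) * (b * t * a) = 0 := by
        calc (b * t * a) * (b * t * a) = b * t * ((a * b) * (t * a)) := by noncomm_ring
          _ = 0 := by rw [hab, zero_mul, mul_zero]
      have h2 := hZ _ hsq
      calc b * t * (a * e) = b * t * a * e := by noncomm_ring
        _ = 0 := h2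
    have h3 := L0 b (a * e) h1
    exact h3
  -- Z → right e-reversible
  have ZA : (∀ x : R, x * x = 0 → x * e = 0) →
      ∀ a b : R, a * b = 0 → b * a * e = 0 := by
    intro hZ a b hab
    apply hZ
    calc b * a * (b * a) = b * ((a * b) * a) := by noncomm_ring
      _ = 0 := by rw [hab, zero_mul, mul_zero]
  -- right e-reversible → Z
  have AZ : (∀ a b : R, a * b = 0 → b * a * e = 0) →
      ∀ x : R, x * x = 0 → x * e = 0 := by
    intro hrev x hx
    apply L01
    intro r
    have h1 : x * (x * r) = 0 := by rw [← mul_assoc, hx, zero_mul]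
    have h2 := hrev x (x * r) h1
    calc x * r * (x * e) = x * r * x * e := by noncomm_ring
      _ = 0 := h2
  -- Z → right e-reduced
  have ZB : (∀ x : R, x * x = 0 → x * e = 0) →
      ∀ n : R, IsNilpotent n → n * e = 0 := by
    intro hZ
    have comm := Zcentral hZ
    have key : ∀ k : ℕ, ∀ x : R, x ^ k = 0 → x * e = 0 := by
      intro k
      induction k using Nat.strong_induction_on with
      | _ k ih =>
        intro x hx
        rcases Nat.lt_or_ge k 2 with hk | hk
        · interval_cases k
          · have h1 : (1 : R) = 0 := by simpa using hx
            calc x * e = x * e * 1 := (mul_one _).symm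
              _ = x * e * 0 := by rw [h1]
              _ = 0 := mul_zero _
          · rw [pow_one] at hx
            rw [hx, zero_mul]
        · have hjk : (k + 1) / 2 < k := by omega
          have hxj : x ^ ((k + 1) / 2) * e = 0 := by
            apply hZ
            have h2 : x ^ ((k + 1) / 2) * x ^ ((k + 1) / 2)
                = x ^ k * x ^ (2 * ((k + 1) / 2) - k) := by
              rw [← pow_add, ← pow_add]
              congr 1
              omega
            rw [h2, hx, zero_mul]
          have hc : Commute x e := (comm x).symm
          have hpow : (x * e) ^ ((k + 1) / 2) = 0 := by
            rw [hc.mul_pow]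
            obtain ⟨i, hi⟩ : ∃ i, (k + 1) / 2 = i + 1 := ⟨(k + 1) / 2 - 1, by omega⟩
            rw [hi, he.pow_succ_eq]
            rw [← hi, hxj]
          have h3 := ih _ hjk (x * e) hpow
          calc x * e = x * (e * e) := by rw [he']
            _ = x * e * e := by rw [mul_assoc]
            _ = 0 := h3
    rintro n ⟨k, hk⟩
    exact key k n hk
  -- right e-reduced → Z
  have BZ : (∀ n : R, IsNilpotent n → n * e = 0) →
      ∀ x : R, x * x = 0 → x * e = 0 := by
    intro hred x hx
    exact hred x ⟨2, by rw [pow_two]; exact hx⟩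
  -- Z → e-symmetric
  have ZC : (∀ x : R, x * x = 0 → x * e = 0) →
      ∀ a b c : R, a * b * c = 0 → a * c * b * e = 0 := by
    intro hZ a b c habc
    have comm := Zcentral hZ
    have h1 : ∀ t : R, a * e * t * (b * c) = 0 := by
      intro t
      exact Zsemi hZ a (b * c) (by rw [← mul_assoc]; exact habc) t
    have h2 : ∀ s t : R, c * s * (a * (e * t) * b) * e = 0 := by
      intro s t
      apply hZ
      have hz : a * (e * t) * b * c = 0 := by
        calc a * (e * t) * b * c = a * e * t * (b * c) := by noncomm_ring
          _ = 0 := h1 t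
      calc (c * s * (a * (e * t) * b)) * (c * s * (a * (e * t) * b))
          = c * s * ((a * (e * t) * b * c) * (s * (a * (e * t) * b))) := by noncomm_ring
        _ = 0 := by rw [hz, zero_mul, mul_zero]
    apply hsemiprime
    intro t
    calc a * c * b * e * t * (a * c * b * e)
        = a * c * b * ((e * t) * a) * (c * b * e) := by noncomm_ring
      _ = a * c * b * ((t * e) * a) * (c * b * e) := by rw [comm t]
      _ = a * c * b * (t * (e * a)) * (c * b * e) := by rw [mul_assoc t e a]
      _ = a * c * b * (t * (a * e)) * (c * b * e) := by rw [comm a]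
      _ = a * (c * (b * t) * (a * (e * c) * b) * e) := by noncomm_ring
      _ = a * 0 := by rw [h2 (b * t) c]
      _ = 0 := mul_zero a
  -- e-symmetric → Z
  have CZ : (∀ a b c : R, a * b * c = 0 → a * c * b * e = 0) →
      ∀ x : R, x * x = 0 → x * e = 0 := by
    intro hsym x hx
    apply L01
    intro r
    have h1 : x * x * r = 0 := by rw [hx, zero_mul]
    have h2 := hsym x x r h1
    calc x * r * (x * e) = x * r * x * e := by noncomm_ring
      _ = 0 := h2
  -- Z → right e-semicommutative
  have ZD : (∀ x : R, x * x = 0 → x * e = 0) →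
      ∀ a b : R, a * b = 0 → ∀ r : R, a * r * b * e = 0 := by
    intro hZ a b hab r
    have comm := Zcentral hZ
    have hs := Zsemi hZ a b hab
    calc a * r * b * e = a * ((r * b) * e) := by noncomm_ring
      _ = a * (e * (r * b)) := by rw [comm (r * b)]
      _ = a * e * r * b := by noncomm_ring
      _ = 0 := hs r
  -- right e-semicommutative → Z
  have DZ : (∀ a b : R, a * b = 0 → ∀ r : R, a * r * b * e = 0) →
      ∀ x : R, x * x = 0 → x * e = 0 := by
    intro hsc x hx
    apply L01
    intro r
    have h2 := hsc x x hx r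
    calc x * r * (x * e) = x * r * x * e := by noncomm_ring
      _ = 0 := h2
  exact ⟨⟨fun h => ZB (AZ h), fun h => ZA (BZ h)⟩,
    ⟨fun h => ZC (AZ h), fun h => ZA (CZ h)⟩,
    ⟨fun h => ZD (AZ h), fun h => ZA (DZ h)⟩⟩
end

section
/- Let R be a ring and e a nonzero idempotent of R. Then R is right e-reversible and prime if and only if R is a domain (R is nontrivial and has no zero divisors). -/
/-- `R` is right `e`-reversible and prime iff `R` is a domain. -/
theorem right_e_reversible_prime_iff_domain {R : Type*} [Ring R]
    (e : R) (he : IsIdempotentElem e) (hne : e ≠ 0) :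
    ((∀ a b : R, a * b = 0 → b * a * e = 0) ∧
        (∀ a b : R, (∀ r : R, a * r * b = 0) → a = 0 ∨ b = 0)) ↔
      (Nontrivial R ∧ ∀ a b : R, a * b = 0 → a = 0 ∨ b = 0) := by
  constructor
  · rintro ⟨hrev, hprime⟩
    refine ⟨⟨e, 0, hne⟩, ?_⟩
    -- key: for all x, (e*x - x)*e = 0, i.e. e*x*e = x*e
    have key : ∀ x : R, e * x * e = x * e := by
      intro x
      have h0 : e * (e * x - x) = 0 := by
        rw [mul_sub, ← mul_assoc, he.eq, sub_self]
      have h1 := hrev e (e * x - x) h0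
      rw [mul_assoc, he.eq, sub_mul] at h1
      exact sub_eq_zero.mp h1
    intro a b hab
    have h1 : ∀ r : R, b * r * (a * e) = 0 := by
      intro r
      have h2 : a * (b * r) = 0 := by rw [← mul_assoc, hab, zero_mul]
      have h3 := hrev a (b * r) h2
      calc b * r * (a * e) = b * r * a * e := by simp only [mul_assoc]
        _ = 0 := h3
    rcases hprime b (a * e) h1 with hb | hae
    · right; exact hb
    · left
      have h4 : ∀ r : R, a * r * e = 0 := by
        intro r
        calc a * r * e = a * (r * e) := by rw [mul_assoc]
          _ = a * (e * (r * e)) := by rw [← mul_assoc e r e, key]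
          _ = a * e * (r * e) := by rw [mul_assoc]
          _ = 0 := by rw [hae, zero_mul]
      rcases hprime a e h4 with ha | h
      · exact ha
      · exact absurd h hne
  · rintro ⟨hnt, hdom⟩
    constructor
    · intro a b hab
      rcases hdom a b hab with h | h <;> simp [h]
    · intro a b h
      have := h 1
      rw [mul_one] at this
      exact hdom a b this
end

section
/- Let R be a reduced ring. If A and B are 3×3 matrices over R that are upper triangular with all diagonal entries equal (i.e., A, B lie in D₃(R)) and AB = 0, then BAE = 0, where E is the 3×3 matrix unit E₂₂ whose (2,2)-entry is 1 and all other entries are 0. -/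
/-!
Write `a, x` for the entries `(1,1), (0,1)` of `A` and `b, y` for those of `B`. The entries
`a * b` and `a * y + x * b` of `A * B` vanish, and the only nonzero entries of `B * A * E₂₂` can be
`b * a` and `b * x + y * a`: the claim is that dual numbers over a reduced ring form a reversible
ring. Reduced rings are reversible and satisfy `a * b = 0 → a * r * b = 0`; this kills every term
of `(b * x + y * a) ^ 2`.
-/

namespace IsReduced

section MonoidWithZero

variable {M₀ : Type*} [MonoidWithZero M₀] [IsReduced M₀] {a b : M₀}

theorem mul_eq_zero_comm (h : a * b = 0) : b * a = 0 :=
  sq_eq_zero_iff.mp <| by rw [sq, mul_assoc, ← mul_assoc a, h, zero_mul, mul_zero]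

theorem mul_mul_eq_zero (h : a * b = 0) (r : M₀) : a * r * b = 0 :=
  sq_eq_zero_iff.mp <| by
    rw [sq, show a * r * b * (a * r * b) = a * r * (b * a) * (r * b) by simp only [mul_assoc],
      mul_eq_zero_comm h, mul_zero, zero_mul]

end MonoidWithZero

variable {R : Type*} [Semiring R] [IsReduced R] {a b x y : R}

theorem mul_add_mul_eq_zero_comm (hab : a * b = 0) (h : a * y + x * b = 0) :
    b * x + y * a = 0 := by
  have hba := mul_eq_zero_comm hab
  have hbxb : b * x * b = 0 := by
    simpa [mul_add, ← mul_assoc, hba] using congrArg (b * ·) h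
  have haya : a * y * a = 0 := by
    simpa [add_mul, mul_assoc, hba] using congrArg (· * a) h
  refine sq_eq_zero_iff.mp ?_
  calc (b * x + y * a) ^ 2
      = b * x * b * x + b * (x * y) * a + y * (a * b) * x + y * (a * y * a) := by
        simp only [sq, add_mul, mul_add, mul_assoc]; abel
    _ = 0 := by simp [hbxb, mul_mul_eq_zero hba, hab, haya]

end IsReduced

theorem D3_right_E22_reversible_general {R : Type*} [Ring R] [IsReduced R]
    (A B : Matrix (Fin 3) (Fin 3) R)
    (hAtri : ∀ i j : Fin 3, j < i → A i j = 0)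
    (hAd1 : A 0 0 = A 1 1)
    (hBtri : ∀ i j : Fin 3, j < i → B i j = 0)
    (hBd1 : B 0 0 = B 1 1)
    (hAB : A * B = 0) :
    B * A * Matrix.single (1 : Fin 3) (1 : Fin 3) (1 : R) = 0 := by
  have hA21 : A 2 1 = 0 := hAtri 2 1 (by decide)
  have hB10 : B 1 0 = 0 := hBtri 1 0 (by decide)
  have hB20 : B 2 0 = 0 := hBtri 2 0 (by decide)
  have hB21 : B 2 1 = 0 := hBtri 2 1 (by decide)
  have hab : A 1 1 * B 1 1 = 0 := by
    simpa [Matrix.mul_apply, Fin.sum_univ_three, hB10, hB20, hAd1, hBd1] using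
      congrFun₂ hAB 0 0
  have hxy : A 1 1 * B 0 1 + A 0 1 * B 1 1 = 0 := by
    simpa [Matrix.mul_apply, Fin.sum_univ_three, hB21, hAd1] using congrFun₂ hAB 0 1
  have hba := IsReduced.mul_eq_zero_comm hab
  have hyx := IsReduced.mul_add_mul_eq_zero_comm hab hxy
  ext i j
  fin_cases i <;> fin_cases j <;>
    simp [Matrix.mul_apply, Fin.sum_univ_three, Matrix.single, hA21, hB10, hB20, hB21, hBd1,
      hba, hyx]

/-- Over a reduced ring, if `A, B ∈ D₃(R)` (upper triangular with constant diagonal)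
and `A * B = 0`, then `B * A * E₂₂ = 0`. -/
theorem D3_right_E22_reversible {R : Type*} [Ring R] [IsReduced R]
    (A B : Matrix (Fin 3) (Fin 3) R)
    (hAtri : ∀ i j : Fin 3, j < i → A i j = 0)
    (hAd1 : A 0 0 = A 1 1) (hAd2 : A 1 1 = A 2 2)
    (hBtri : ∀ i j : Fin 3, j < i → B i j = 0)
    (hBd1 : B 0 0 = B 1 1) (hBd2 : B 1 1 = B 2 2)
    (hAB : A * B = 0) :
    B * A * Matrix.single (1 : Fin 3) (1 : Fin 3) (1 : R) = 0 :=
  D3_right_E22_reversible_general A B hAtri hAd1 hBtri hBd1 hAB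
end

section
/- Let R be an Armendariz ring. Then R is right e-reversible for every nonzero idempotent e of R if and only if the polynomial ring R[x] is right E-reversible for every nonzero idempotent E of R[x]. -/
open Polynomial

/-- For an Armendariz ring `R`: `R` is right `e`-reversible for every nonzero
idempotent `e` of `R` iff `R[x]` is right `E`-reversible for every nonzero
idempotent `E` of `R[x]`. -/
theorem armendariz_right_reversible_iff_polynomial {R : Type*} [Ring R]
    (harm : ∀ f g : Polynomial R, f * g = 0 → ∀ i j : ℕ, f.coeff i * g.coeff j = 0) :
    (∀ e : R, IsIdempotentElem e → e ≠ 0 → ∀ a b : R, a * b = 0 → b * a * e = 0) ↔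
      (∀ E : Polynomial R, IsIdempotentElem E → E ≠ 0 →
        ∀ f g : Polynomial R, f * g = 0 → g * f * E = 0) := by
  constructor
  · intro h E hE hE0 f g hfg
    set e := E.coeff 0 with he
    have h1 : E * (1 - E) = 0 := by rw [mul_sub, mul_one, hE.eq, sub_self]
    have h2 : (1 - E) * E = 0 := by rw [sub_mul, one_mul, hE.eq, sub_self]
    have hcoeff : ∀ i, 1 ≤ i → E.coeff i = 0 := by
      intro i hi
      have a1 := harm E (1 - E) h1 i 0
      have a2 := harm (1 - E) E h2 i 0
      simp only [coeff_sub, coeff_one, if_neg (by omega : ¬ i = 0), if_true] at a1 a2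
      have h3 : E.coeff i * E.coeff 0 = 0 := by
        rw [zero_sub, neg_mul, neg_eq_zero] at a2
        exact a2
      calc E.coeff i = E.coeff i * (1 - E.coeff 0)
            + E.coeff i * E.coeff 0 := by rw [mul_sub, mul_one, sub_add_cancel]
        _ = 0 := by rw [a1, h3, add_zero]
    have hEC : E = C e := by
      ext n
      rcases Nat.eq_zero_or_pos n with rfl | hn
      · simp [he]
      · rw [hcoeff n hn, coeff_C, if_neg (by omega)]
    have hee : IsIdempotentElem e := by
      have h4 : C e * C e = C e := by rw [← hEC]; exact hE
      rw [← C_mul, C_inj] at h4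
      exact h4
    have hne : e ≠ 0 := fun h0 => hE0 (by rw [hEC, h0, C_0])
    have key : ∀ i j, g.coeff j * f.coeff i * e = 0 :=
      fun i j => h e hee hne _ _ (harm f g hfg i j)
    rw [hEC]
    ext n
    rw [coeff_zero, coeff_mul_C, coeff_mul, Finset.sum_mul]
    exact Finset.sum_eq_zero fun x _ => key x.2 x.1
  · intro h e hee hne a b hab
    have h5 := h (C e) (by rw [IsIdempotentElem, ← C_mul, hee.eq])
      (fun h0 => hne (C_eq_zero.mp h0)) (C a) (C b)
      (by rw [← C_mul, hab, C_0])
    rw [← C_mul, ← C_mul] at h5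
    exact C_eq_zero.mp h5
end
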